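/- The element φ(X,Y) = [X,Y] of the completed free Lie algebra on X, Y satisfies the Lie 5-cycle relation φ(X₁₂,X₂₃)+φ(X₃₄,X₄₅)+φ(X₅₁,X₁₂)+φ(X₂₃,X₃₄)+φ(X₄₅,X₅₁)=0 in the completed pure sphere braid Lie algebra 𝔓₅, but does not satisfy the 3-cycle relation φ(X,Y)+φ(Y,Z)+φ(Z,X)=0 with X+Y+Z=0. -/

import Mathlib

open scoped BigOperators

/-- Words in the letters `X = 0`, `Y = 1`, ... -/
abbrev Word (n : ℕ) := List (Fin n)

/-- Coefficient families of non-commutative formal power series `k⟨⟨X₁,…,Xₙ⟩⟩`: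
a series is recorded by its coefficient at each word. -/
abbrev NC (k : Type*) (n : ℕ) := Word n → k

/-- The list of shuffles (with multiplicity) of two words. -/
def shuffle {α : Type*} : List α → List α → List (List α)
  | [], v => [v]
  | u, [] => [u]
  | a :: u, b :: v =>
      ((shuffle u (b :: v)).map (a :: ·)) ++ ((shuffle (a :: u) v).map (b :: ·))
  termination_by u v => u.length + v.length
  decreasing_by all_goals simp +arith +decide

variable {k : Type*}

/-- `φ` is group-like for the coproduct with `X`, `Y` primitive:
`Δφ = φ ⊗ φ` and constant term 1, expressed coefficientwise via shuffles. -/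
def IsGroupLike [CommRing k] (φ : NC k 2) : Prop :=
  φ [] = 1 ∧ ∀ u v : Word 2, φ u * φ v = ((shuffle u v).map φ).sum

/-- `φ` is Lie-like (primitive): `Δφ = φ⊗1 + 1⊗φ`, coefficientwise. -/
def IsLieLike [CommRing k] (φ : NC k 2) : Prop :=
  φ [] = 0 ∧ ∀ u v : Word 2, u ≠ [] → v ≠ [] → ((shuffle u v).map φ).sum = 0

/-- commutator group-like: group-like with vanishing coefficients of `X` and `Y`. -/
def IsCommGroupLike [CommRing k] (φ : NC k 2) : Prop :=
  IsGroupLike φ ∧ φ [0] = 0 ∧ φ [1] = 0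

/-- A degree-one element `a·T` of `A[[T]]`, modelling a degree-1 element of a
completed graded algebra. -/
noncomputable def lin {A : Type*} [Ring A] (a : A) : PowerSeries A :=
  PowerSeries.mk fun n => if n = 1 then a else 0

/-- Substitution `φ(X₁, X₂)` of a non-commutative power series `φ` at two
elements (of positive valuation) of a completed graded algebra, where the
completion is modelled by `A[[T]]` (degree `n` part = coefficient of `Tⁿ`). -/
noncomputable def substPS [CommRing k] {A : Type*} [Ring A] [Algebra k A]
    (φ : NC k 2) (P Q : PowerSeries A) : PowerSeries A :=
  PowerSeries.mk fun n =>
    ∑ m ∈ Finset.range (n + 1), ∑ u : Fin m → Fin 2,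
      φ (List.ofFn u) • PowerSeries.coeff n (((List.ofFn u).map ![P, Q]).prod)

/-- Exponential of a power series (meaningful when the constant term vanishes). -/
noncomputable def expPS (k : Type*) [Field k] {A : Type*} [Ring A] [Algebra k A]
    (s : PowerSeries A) : PowerSeries A :=
  PowerSeries.mk fun n =>
    ∑ m ∈ Finset.range (n + 1), (Nat.factorial m : k)⁻¹ • PowerSeries.coeff n (s ^ m)

/-- Coefficients of the multiplicative inverse of a power series with
constant term `1`. -/
noncomputable def invCoeff {A : Type*} [Ring A] (s : PowerSeries A) : ℕ → A
  | 0 => 1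
  | n + 1 => -∑ j : Fin (n + 1), invCoeff s j.1 * PowerSeries.coeff (n + 1 - j.1) s
  termination_by n => n
  decreasing_by exact j.2

/-- Inverse of a power series with constant term `1`. -/
noncomputable def PSInv {A : Type*} [Ring A] (s : PowerSeries A) : PowerSeries A :=
  PowerSeries.mk (invCoeff s)

/-- Relations presenting (the enveloping algebra of) the pure sphere braid Lie
algebra `𝔓₅` on 5 strings. -/
inductive P5Rel (k : Type*) [CommRing k] :
    FreeAlgebra k (Fin 5 × Fin 5) → FreeAlgebra k (Fin 5 × Fin 5) → Prop
  | diag (i : Fin 5) : P5Rel k (FreeAlgebra.ι k (i, i)) 0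
  | symm (i j : Fin 5) : P5Rel k (FreeAlgebra.ι k (i, j)) (FreeAlgebra.ι k (j, i))
  | rowsum (i : Fin 5) : P5Rel k (∑ j : Fin 5, FreeAlgebra.ι k (i, j)) 0
  | disj (i j l m : Fin 5) (h : i ≠ l ∧ i ≠ m ∧ j ≠ l ∧ j ≠ m) :
      P5Rel k (FreeAlgebra.ι k (i, j) * FreeAlgebra.ι k (l, m))
              (FreeAlgebra.ι k (l, m) * FreeAlgebra.ι k (i, j))

/-- The (graded) enveloping algebra `U𝔓₅` of the pure sphere braid Lie algebra. -/
abbrev P5A (k : Type*) [CommRing k] := RingQuot (P5Rel k)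

/-- The generator `X_{ij}` of `U𝔓₅`. -/
noncomputable def Xg (k : Type*) [CommRing k] (i j : Fin 5) : P5A k :=
  RingQuot.mkAlgHom k (P5Rel k) (FreeAlgebra.ι k (i, j))

/-- Relations presenting (the enveloping algebra of) the infinitesimal braid
("chord diagram") Lie algebra `𝔞ₙ`. -/
inductive ARel (k : Type*) [CommRing k] (n : ℕ) :
    FreeAlgebra k (Fin n × Fin n) → FreeAlgebra k (Fin n × Fin n) → Prop
  | diag (i : Fin n) : ARel k n (FreeAlgebra.ι k (i, i)) 0
  | symm (i j : Fin n) : ARel k n (FreeAlgebra.ι k (i, j)) (FreeAlgebra.ι k (j, i))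
  | comm3 (i j l : Fin n) (h : i ≠ j ∧ i ≠ l ∧ j ≠ l) :
      ARel k n (FreeAlgebra.ι k (i, j) * (FreeAlgebra.ι k (i, l) + FreeAlgebra.ι k (j, l)))
               ((FreeAlgebra.ι k (i, l) + FreeAlgebra.ι k (j, l)) * FreeAlgebra.ι k (i, j))
  | comm4 (i j l m : Fin n)
      (h : i ≠ j ∧ i ≠ l ∧ i ≠ m ∧ j ≠ l ∧ j ≠ m ∧ l ≠ m) :
      ARel k n (FreeAlgebra.ι k (i, j) * FreeAlgebra.ι k (l, m))
               (FreeAlgebra.ι k (l, m) * FreeAlgebra.ι k (i, j))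

/-- The (graded) enveloping algebra `U𝔞ₙ`. -/
abbrev AA (k : Type*) [CommRing k] (n : ℕ) := RingQuot (ARel k n)

/-- The generator `t_{ij}` of `U𝔞ₙ`. -/
noncomputable def tg (k : Type*) [CommRing k] (n : ℕ) (i j : Fin n) : AA k n :=
  RingQuot.mkAlgHom k (ARel k n) (FreeAlgebra.ι k (i, j))

/-- The series `X` (i.e. the image of the first generator) in the model
`(FreeAlgebra k (Fin 2))[[T]]` of `k⟨⟨X,Y⟩⟩`. -/
noncomputable def XF (k : Type*) [CommRing k] : PowerSeries (FreeAlgebra k (Fin 2)) :=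
  lin (FreeAlgebra.ι k (0 : Fin 2))

/-- The series `Y`. -/
noncomputable def YF (k : Type*) [CommRing k] : PowerSeries (FreeAlgebra k (Fin 2)) :=
  lin (FreeAlgebra.ι k (1 : Fin 2))

/-- The series `Z = -X-Y`. -/
noncomputable def ZF (k : Type*) [CommRing k] : PowerSeries (FreeAlgebra k (Fin 2)) :=
  -XF k - YF k

/-- `φ(X_{ab}, X_{bc})` in the completed `U𝔓₅`. -/
noncomputable def S5 (k : Type*) [Field k] (φ : NC k 2) (a b c : Fin 5) :
    PowerSeries (P5A k) :=
  substPS φ (lin (Xg k a b)) (lin (Xg k b c))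

/-- The multiplicative 5-cycle relation
`φ(X₁₂,X₂₃)φ(X₃₄,X₄₅)φ(X₅₁,X₁₂)φ(X₂₃,X₃₄)φ(X₄₅,X₅₁) = 1` in the completed `U𝔓₅`. -/
def FiveCycleMul (k : Type*) [Field k] (φ : NC k 2) : Prop :=
  S5 k φ 0 1 2 * S5 k φ 2 3 4 * S5 k φ 4 0 1 * S5 k φ 1 2 3 * S5 k φ 3 4 0 = 1

/-- `t_{ij}` as a degree-one element of the completed `U𝔞₄`. -/
noncomputable def lt (k : Type*) [Field k] (i j : Fin 4) : PowerSeries (AA k 4) :=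
  lin (tg k 4 i j)

/-- Drinfel'd's pentagon equation
`φ(t₁₂,t₂₃+t₂₄)φ(t₁₃+t₂₃,t₃₄) = φ(t₂₃,t₃₄)φ(t₁₂+t₁₃,t₂₄+t₃₄)φ(t₁₂,t₂₃)`
in the completed `U𝔞₄` (strings are `0,1,2,3`). -/
def Pentagon (k : Type*) [Field k] (φ : NC k 2) : Prop :=
  substPS φ (lt k 0 1) (lt k 1 2 + lt k 1 3) * substPS φ (lt k 0 2 + lt k 1 2) (lt k 2 3) =
    substPS φ (lt k 1 2) (lt k 2 3) *
      substPS φ (lt k 0 1 + lt k 0 2) (lt k 1 3 + lt k 2 3) * substPS φ (lt k 0 1) (lt k 1 2)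

/-- The 2-cycle relation `φ(X,Y)φ(Y,X) = 1` in `k⟨⟨X,Y⟩⟩`. -/
def TwoCycleMul (k : Type*) [Field k] (φ : NC k 2) : Prop :=
  substPS φ (XF k) (YF k) * substPS φ (YF k) (XF k) = 1

/-- The 3-cycle relation
`e^{μX/2}φ(Z,X)e^{μZ/2}φ(Y,Z)e^{μY/2}φ(X,Y) = 1`, `Z = -X-Y`, in `k⟨⟨X,Y⟩⟩`. -/
def ThreeCycleMul (k : Type*) [Field k] (μ : k) (φ : NC k 2) : Prop :=
  expPS k ((μ / 2) • XF k) * substPS φ (ZF k) (XF k) * expPS k ((μ / 2) • ZF k) *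
      substPS φ (YF k) (ZF k) * expPS k ((μ / 2) • YF k) * substPS φ (XF k) (YF k) = 1

/-- The special 3-cycle relation `φ(Z,X)φ(Y,Z)φ(X,Y) = 1`, `Z = -X-Y`. -/
def Special3 (k : Type*) [Field k] (φ : NC k 2) : Prop :=
  substPS φ (ZF k) (XF k) * substPS φ (YF k) (ZF k) * substPS φ (XF k) (YF k) = 1

/-- Drinfel'd's first hexagon equation, for elements `a = t₁₂`, `b = t₁₃`, `c = t₂₃`:
`exp(μ(t₁₃+t₂₃)/2) = φ(t₁₃,t₁₂)exp(μt₁₃/2)φ(t₁₃,t₂₃)⁻¹exp(μt₂₃/2)φ(t₁₂,t₂₃)`. -/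
def Hex1 (k : Type*) [Field k] {A : Type*} [Ring A] [Algebra k A]
    (μ : k) (φ : NC k 2) (a b c : A) : Prop :=
  expPS k ((μ / 2) • (lin b + lin c)) =
    substPS φ (lin b) (lin a) * expPS k ((μ / 2) • lin b) * PSInv (substPS φ (lin b) (lin c)) *
      expPS k ((μ / 2) • lin c) * substPS φ (lin a) (lin c)

/-- Drinfel'd's second hexagon equation, for elements `a = t₁₂`, `b = t₁₃`, `c = t₂₃`:
`exp(μ(t₁₂+t₁₃)/2) = φ(t₂₃,t₁₃)⁻¹exp(μt₁₃/2)φ(t₁₂,t₁₃)exp(μt₁₂/2)φ(t₁₂,t₂₃)⁻¹`. -/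
def Hex2 (k : Type*) [Field k] {A : Type*} [Ring A] [Algebra k A]
    (μ : k) (φ : NC k 2) (a b c : A) : Prop :=
  expPS k ((μ / 2) • (lin a + lin b)) =
    PSInv (substPS φ (lin c) (lin b)) * expPS k ((μ / 2) • lin b) * substPS φ (lin a) (lin b) *
      expPS k ((μ / 2) • lin a) * PSInv (substPS φ (lin a) (lin c))

/-- The series `φ(X,Y) = [X,Y] = XY - YX`. -/
def commSeries (k : Type*) [Field k] : NC k 2 := fun w =>
  if w = [0, 1] then 1 else if w = [1, 0] then -1 else 0

/-!
Substituting degree-one elements `a`, `b` into `φ = XY - YX` gives the degree-two element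
`⁅a, b⁆`, so both claims are statements about brackets of generators.

In `𝔓₅` write `t(i,j,l) = ⁅X_ij, X_jl⁆`. The row relation `∑_l X_jl = 0` gives
`∑_l t(i,j,l) = 0`; combined with the commutation of disjoint generators it shows that `t` is
invariant under cyclic permutations of `(i,j,l)` and changes sign when the order is reversed.
The 5-cycle sum is then a combination of three row relations.

With `Z = -X - Y` the 3-cycle sum is `3⁅X, Y⁆`, which is nonzero in characteristic zero: the
representation `X ↦ E₀₁`, `Y ↦ E₁₀` by `2 × 2` matrices sends `⁅X, Y⁆` to `E₀₀ - E₁₁`.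
-/

section Substitution

variable {A : Type*} [Ring A]

lemma lin_eq_monomial (a : A) : lin a = PowerSeries.monomial 1 a := by
  ext n
  simp [lin, PowerSeries.coeff_monomial]

lemma prod_map_monomial_one (w : List A) :
    (w.map (PowerSeries.monomial 1)).prod = PowerSeries.monomial w.length w.prod := by
  induction w with
  | nil => simp
  | cons a w ih =>
    rw [List.map_cons, List.prod_cons, ih, PowerSeries.monomial_mul_monomial, List.prod_cons,
      List.length_cons, add_comm]

variable [CommRing k] [Algebra k A]

lemma coeff_substPS_lin (φ : NC k 2) (a b : A) (n : ℕ) :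
    PowerSeries.coeff n (substPS φ (lin a) (lin b)) =
      ∑ u : Fin n → Fin 2, φ (List.ofFn u) • ((List.ofFn u).map ![a, b]).prod := by
  have hlin : ![lin a, lin b] = PowerSeries.monomial 1 ∘ ![a, b] := by
    ext i : 1
    fin_cases i <;> simp [lin_eq_monomial]
  simp only [substPS, PowerSeries.coeff_mk, hlin, ← List.map_map, prod_map_monomial_one,
    List.length_map, List.length_ofFn, PowerSeries.coeff_monomial]
  rw [Finset.sum_eq_single_of_mem n (by simp)]
  · simp
  · intro m _ hmn
    simp [Ne.symm hmn]

end Substitution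

section Commutator

variable (k) [Field k] {A : Type*} [Ring A] [Algebra k A]

lemma commSeries_of_length_ne_two {w : Word 2} (hw : w.length ≠ 2) : commSeries k w = 0 := by
  unfold commSeries
  split_ifs with h01 h10
  · simp [h01] at hw
  · simp [h10] at hw
  · rfl

lemma substPS_commSeries_lin (a b : A) :
    substPS (commSeries k) (lin a) (lin b) = PowerSeries.monomial 2 ⁅a, b⁆ := by
  ext n
  rw [coeff_substPS_lin, PowerSeries.coeff_monomial]
  split_ifs with hn
  · subst hn
    rw [← (piFinTwoEquiv fun _ => Fin 2).symm.sum_comp, Fintype.sum_prod_type]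
    simp [Fin.sum_univ_two, commSeries, Ring.lie_def, sub_eq_add_neg]
  · exact Finset.sum_eq_zero fun u _ => by
      rw [commSeries_of_length_ne_two k (by simpa using hn), zero_smul]

end Commutator

structure IsPureSphereBraid {ι L : Type*} [Fintype ι] [LieRing L] (x : ι → ι → L) :
    Prop where
  diag : ∀ i, x i i = 0
  symm : ∀ i j, x i j = x j i
  sum_eq_zero : ∀ i, ∑ j, x i j = 0
  lie_eq_zero : ∀ i j l m, i ≠ l → i ≠ m → j ≠ l → j ≠ m → ⁅x i j, x l m⁆ = 0

namespace IsPureSphereBraid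

variable {ι L : Type*} [Fintype ι] [LieRing L] {x : ι → ι → L}

lemma sum_lie_eq_zero (hx : IsPureSphereBraid x) (i j : ι) : ∑ l, ⁅x i j, x j l⁆ = 0 := by
  rw [← lie_sum, hx.sum_eq_zero, lie_zero]

lemma lie_add_lie_eq_zero (hx : IsPureSphereBraid x) {i j l : ι} (hij : i ≠ j) (hil : i ≠ l)
    (hjl : j ≠ l) : ⁅x i j, x l i⁆ + ⁅x i j, x l j⁆ = 0 := by
  have hvanish (m : ι) (_ : m ∈ Finset.univ) (hm : m ≠ i ∧ m ≠ j) : ⁅x i j, x l m⁆ = 0 :=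
    hx.lie_eq_zero i j l m hil hm.1.symm hjl hm.2.symm
  rw [← Finset.sum_eq_add i j hij hvanish (absurd (Finset.mem_univ i))
    (absurd (Finset.mem_univ j)), ← lie_sum, hx.sum_eq_zero, lie_zero]

lemma lie_cyclic (hx : IsPureSphereBraid x) {i j l : ι} (hij : i ≠ j) (hil : i ≠ l)
    (hjl : j ≠ l) : ⁅x i j, x j l⁆ = ⁅x j l, x l i⁆ := by
  have h := hx.lie_add_lie_eq_zero hjl hij.symm hil.symm
  rw [← lie_skew, hx.symm i l] at h
  rwa [neg_add_eq_zero] at h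

lemma lie_reverse_eq_neg (hx : IsPureSphereBraid x) (i j l : ι) :
    ⁅x l j, x j i⁆ = -⁅x i j, x j l⁆ := by
  rw [hx.symm l j, hx.symm j i, lie_skew]

lemma five_cycle_eq_zero {x : Fin 5 → Fin 5 → L} (hx : IsPureSphereBraid x) :
    ⁅x 0 1, x 1 2⁆ + ⁅x 2 3, x 3 4⁆ + ⁅x 4 0, x 0 1⁆ + ⁅x 1 2, x 2 3⁆ + ⁅x 3 4, x 4 0⁆ = 0 := by
  have r01 := hx.sum_lie_eq_zero 0 1
  have r34 := hx.sum_lie_eq_zero 3 4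
  have r13 := hx.sum_lie_eq_zero 1 3
  simp only [Fin.sum_univ_five, hx.diag, hx.symm 1 0, hx.symm 4 3, hx.symm 3 1, lie_zero,
    lie_self, zero_add, add_zero] at r01 r34 r13
  have cyc (i j l : Fin 5) (h : i ≠ j ∧ i ≠ l ∧ j ≠ l := by decide) :=
    hx.lie_cyclic h.1 h.2.1 h.2.2
  rw [← cyc 0 1 3, hx.lie_reverse_eq_neg 2 3 1, ← cyc 1 2 3, cyc 1 3 4] at r13
  rw [cyc 4 0 1, cyc 2 3 4]
  -- the row relations for `(0,1)` and `(3,4)` minus the one for `(1,3)`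
  calc _ = (⁅x 0 1, x 1 2⁆ + ⁅x 0 1, x 1 3⁆ + ⁅x 0 1, x 1 4⁆)
        + (⁅x 3 4, x 4 0⁆ + ⁅x 3 4, x 4 1⁆ + ⁅x 3 4, x 4 2⁆)
        - (⁅x 0 1, x 1 3⁆ + -⁅x 1 2, x 2 3⁆ + ⁅x 3 4, x 4 1⁆) := by abel
    _ = 0 := by rw [r01, r34, r13]; abel

end IsPureSphereBraid

attribute [local instance] LieRing.ofAssociativeRing

lemma isPureSphereBraid_Xg (k : Type*) [CommRing k] : IsPureSphereBraid (Xg k) where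
  diag i := by simpa [Xg] using RingQuot.mkAlgHom_rel k (P5Rel.diag (k := k) i)
  symm i j := RingQuot.mkAlgHom_rel k (P5Rel.symm i j)
  sum_eq_zero i := by simpa [Xg] using RingQuot.mkAlgHom_rel k (P5Rel.rowsum (k := k) i)
  lie_eq_zero i j l m hil him hjl hjm := by
    rw [Ring.lie_def, sub_eq_zero]
    simpa [Xg] using
      RingQuot.mkAlgHom_rel k (P5Rel.disj (k := k) i j l m ⟨hil, him, hjl, hjm⟩)

lemma lie_add_lie_add_lie_neg_sub {L : Type*} [LieRing L] (x y : L) :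
    ⁅x, y⁆ + ⁅y, -x - y⁆ + ⁅-x - y, x⁆ = 3 • ⁅x, y⁆ := by
  simp only [lie_sub, sub_lie, lie_neg, neg_lie, lie_self, ← lie_skew y x]
  abel

lemma lie_ι_zero_ι_one_ne_zero (R : Type*) [CommRing R] [Nontrivial R] :
    ⁅FreeAlgebra.ι R (0 : Fin 2), FreeAlgebra.ι R (1 : Fin 2)⁆ ≠ 0 := by
  intro h
  let ρ := FreeAlgebra.lift R
    ![Matrix.single (0 : Fin 2) (1 : Fin 2) (1 : R), Matrix.single 1 0 1]
  have h00 := congr_arg (fun a => ρ a 0 0) h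
  simp [ρ, Ring.lie_def] at h00

/-- `φ = [X,Y]` satisfies the Lie 5-cycle relation in `𝔓₅` but not the
3-cycle relation (showing the hypothesis `c₂(φ) = 0` is necessary). -/
theorem statement12 (k : Type*) [Field k] [CharZero k] :
    (S5 k (commSeries k) 0 1 2 + S5 k (commSeries k) 2 3 4 + S5 k (commSeries k) 4 0 1 +
        S5 k (commSeries k) 1 2 3 + S5 k (commSeries k) 3 4 0 = 0) ∧
      ¬(substPS (commSeries k) (XF k) (YF k) + substPS (commSeries k) (YF k) (ZF k) +
          substPS (commSeries k) (ZF k) (XF k) = 0) := by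
  constructor
  · simp only [S5, substPS_commSeries_lin, ← map_add,
      (isPureSphereBraid_Xg k).five_cycle_eq_zero, map_zero]
  · have hZ : ZF k = lin (-FreeAlgebra.ι k 0 - FreeAlgebra.ι k 1) := by
      simp only [ZF, XF, YF, lin_eq_monomial, map_neg, map_sub]
    rw [hZ, XF, YF]
    simp only [substPS_commSeries_lin, ← map_add, lie_add_lie_add_lie_neg_sub]
    intro h
    have h2 := congr_arg (PowerSeries.coeff 2) h
    rw [PowerSeries.coeff_monomial_same, map_zero] at h2
    exact smul_ne_zero three_ne_zero (lie_ι_zero_ι_one_ne_zero k) h2
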